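/- Let P and Q be doubly commuting contractions on a complex Hilbert space H (PQ = QP and PQ* = Q*P), and let H = H_1 ⊕ H_2 be the canonical decomposition of Q, where H_1 is the maximal reducing subspace of Q on which Q is unitary. Then H_1 and H_2 are reducing subspaces for P. -/
import Mathlib


open ContinuousLinearMap Filter
open scoped InnerProductSpace

noncomputable section

variable {H : Type*} [NormedAddCommGroup H] [InnerProductSpace ℂ H] [CompleteSpace H]

/-- K is a reducing subspace for T. -/
def Reduces (T : H →L[ℂ] H) (K : Submodule ℂ H) : Prop :=
  (∀ h ∈ K, T h ∈ K) ∧ (∀ h ∈ K, adjoint T h ∈ K)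

/-- The restriction of T to K is a unitary of K (a surjective isometry of K). -/
def UnitaryOn (T : H →L[ℂ] H) (K : Submodule ℂ H) : Prop :=
  (∀ h ∈ K, ‖T h‖ = ‖h‖) ∧ (∀ h ∈ K, ∃ g ∈ K, T g = h)

/-- The restriction of T to K is a pure isometry (unilateral shift). -/
def PureIsometryOn (T : H →L[ℂ] H) (K : Submodule ℂ H) : Prop :=
  (∀ h ∈ K, ‖T h‖ = ‖h‖) ∧
    ∀ h ∈ K, Tendsto (fun n : ℕ => ((adjoint T) ^ n) h) atTop (nhds 0)

/-- The restriction of T to K is completely non-unitary. -/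
def CnuOn (T : H →L[ℂ] H) (K : Submodule ℂ H) : Prop :=
  ∀ L : Submodule ℂ H, L ≤ K → IsClosed (L : Set H) →
    Reduces T L → UnitaryOn T L → L = ⊥

lemma my_adjoint_pow (Q : H →L[ℂ] H) (n : ℕ) : adjoint (Q ^ n) = (adjoint Q) ^ n := by
  rw [← star_eq_adjoint, ← star_eq_adjoint, star_pow]

lemma my_norm_adjoint_le (Q : H →L[ℂ] H) (hQ : ‖Q‖ ≤ 1) : ‖adjoint Q‖ ≤ 1 := by
  rw [← star_eq_adjoint, norm_star]; exact hQ

lemma my_step (T : H →L[ℂ] H) (hT : ‖T‖ ≤ 1) (hT' : ‖adjoint T‖ ≤ 1) (x : H)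
    (hx : ‖T x‖ = ‖x‖) : adjoint T (T x) = x := by
  have hle : ‖adjoint T (T x)‖ ≤ ‖x‖ := by
    calc ‖adjoint T (T x)‖ ≤ ‖adjoint T‖ * ‖T x‖ := le_opNorm _ _
    _ ≤ 1 * ‖x‖ := by rw [hx]; exact mul_le_mul_of_nonneg_right hT' (norm_nonneg _)
    _ = ‖x‖ := one_mul _
  have hre : RCLike.re ⟪adjoint T (T x), x⟫_ℂ = ‖x‖ ^ 2 := by
    rw [adjoint_inner_left, inner_self_eq_norm_sq, hx]
  have key := @norm_sub_sq ℂ _ _ _ _ (adjoint T (T x)) x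
  rw [hre] at key
  have : ‖adjoint T (T x) - x‖ ^ 2 ≤ 0 := by nlinarith [norm_nonneg (adjoint T (T x)), norm_nonneg x]
  have h0 : ‖adjoint T (T x) - x‖ = 0 := by nlinarith [norm_nonneg (adjoint T (T x) - x)]
  rw [norm_eq_zero, sub_eq_zero] at h0
  exact h0

/-- On vectors where all powers of Q and Q* are isometric, (Q*)^n Q^n and Q^n (Q*)^n fix h. -/
lemma my_fix (Q : H →L[ℂ] H) (hQ : ‖Q‖ ≤ 1) (h : H)
    (hh : ∀ n : ℕ, 1 ≤ n → ‖(Q ^ n) h‖ = ‖h‖ ∧ ‖((adjoint Q) ^ n) h‖ = ‖h‖) :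
    ∀ n : ℕ, ((adjoint Q) ^ n) ((Q ^ n) h) = h ∧ (Q ^ n) (((adjoint Q) ^ n) h) = h := by
  have hQ' := my_norm_adjoint_le Q hQ
  have hnorm : ∀ n : ℕ, ‖(Q ^ n) h‖ = ‖h‖ := by
    intro n
    rcases Nat.eq_zero_or_pos n with rfl | hn
    · simp
    · exact (hh n hn).1
  have hnorm' : ∀ n : ℕ, ‖((adjoint Q) ^ n) h‖ = ‖h‖ := by
    intro n
    rcases Nat.eq_zero_or_pos n with rfl | hn
    · simp
    · exact (hh n hn).2
  intro n
  induction n with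
  | zero => simp
  | succ n ih =>
    constructor
    · have e1 : (Q ^ (n + 1)) h = Q ((Q ^ n) h) := by
        rw [pow_succ']; rfl
      have e2 : ∀ x, ((adjoint Q) ^ (n + 1)) x = ((adjoint Q) ^ n) (adjoint Q x) := by
        intro x; rw [pow_succ]; rfl
      rw [e1, e2, my_step Q hQ hQ' ((Q ^ n) h) (by rw [← e1, hnorm (n+1), hnorm n]), ih.1]
    · have e1 : ((adjoint Q) ^ (n + 1)) h = adjoint Q (((adjoint Q) ^ n) h) := by
        rw [pow_succ']; rfl
      have e2 : ∀ x, (Q ^ (n + 1)) x = (Q ^ n) (Q x) := by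
        intro x; rw [pow_succ]; rfl
      have hstep := my_step (adjoint Q) hQ' (by rwa [adjoint_adjoint]) (((adjoint Q) ^ n) h)
        (by rw [← e1, hnorm' (n+1), hnorm' n])
      rw [adjoint_adjoint] at hstep
      rw [e1, e2, hstep, ih.2]

/-- Invariance of the set under any R doubly commuting with Q. -/
lemma my_inv (Q R : H →L[ℂ] H) (hQ : ‖Q‖ ≤ 1)
    (h1 : R * Q = Q * R) (h2 : R * adjoint Q = adjoint Q * R) (h : H)
    (hh : ∀ n : ℕ, 1 ≤ n → ‖(Q ^ n) h‖ = ‖h‖ ∧ ‖((adjoint Q) ^ n) h‖ = ‖h‖) :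
    ∀ n : ℕ, 1 ≤ n → ‖(Q ^ n) (R h)‖ = ‖R h‖ ∧ ‖((adjoint Q) ^ n) (R h)‖ = ‖R h‖ := by
  have hfix := my_fix Q hQ h hh
  have hc1 : ∀ n : ℕ, ∀ x, R ((Q ^ n) x) = (Q ^ n) (R x) := by
    intro n x
    have : R * Q ^ n = Q ^ n * R := (Commute.pow_right h1 n)
    exact congrFun (congrArg DFunLike.coe this) x
  have hc2 : ∀ n : ℕ, ∀ x, R (((adjoint Q) ^ n) x) = ((adjoint Q) ^ n) (R x) := by
    intro n x
    have : R * (adjoint Q) ^ n = (adjoint Q) ^ n * R := (Commute.pow_right h2 n)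
    exact congrFun (congrArg DFunLike.coe this) x
  intro n _
  constructor
  · have key : ((adjoint Q) ^ n) ((Q ^ n) (R h)) = R h := by
      rw [← hc1, ← hc2, (hfix n).1]
    have : ‖(Q ^ n) (R h)‖ ^ 2 = ‖R h‖ ^ 2 := by
      rw [← inner_self_eq_norm_sq (𝕜 := ℂ), ← inner_self_eq_norm_sq (𝕜 := ℂ) (R h)]
      rw [← adjoint_inner_right, my_adjoint_pow, key]
    exact (sq_eq_sq₀ (norm_nonneg _) (norm_nonneg _)).mp this
  · have key : (Q ^ n) (((adjoint Q) ^ n) (R h)) = R h := by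
      rw [← hc2, ← hc1, (hfix n).2]
    have : ‖((adjoint Q) ^ n) (R h)‖ ^ 2 = ‖R h‖ ^ 2 := by
      rw [← inner_self_eq_norm_sq (𝕜 := ℂ), ← inner_self_eq_norm_sq (𝕜 := ℂ) (R h)]
      conv_lhs => rw [← adjoint_inner_right, my_adjoint_pow, adjoint_adjoint, key]
    exact (sq_eq_sq₀ (norm_nonneg _) (norm_nonneg _)).mp this

theorem doubly_commuting_canonical_decomposition_reduces
    (P Q : H →L[ℂ] H) (hP : ‖P‖ ≤ 1) (hQ : ‖Q‖ ≤ 1)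
    (h1 : P * Q = Q * P) (h2 : P * adjoint Q = adjoint Q * P)
    (H1 : Submodule ℂ H)
    (hH1 : (H1 : Set H) = {h : H | ∀ n : ℕ, 1 ≤ n →
      ‖(Q ^ n) h‖ = ‖h‖ ∧ ‖((adjoint Q) ^ n) h‖ = ‖h‖}) :
    Reduces P H1 ∧ Reduces P H1ᗮ := by
  have hmem : ∀ x : H, x ∈ H1 ↔ ∀ n : ℕ, 1 ≤ n →
      ‖(Q ^ n) x‖ = ‖x‖ ∧ ‖((adjoint Q) ^ n) x‖ = ‖x‖ := by
    intro x
    constructor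
    · intro hx
      have : x ∈ (H1 : Set H) := hx
      rwa [hH1] at this
    · intro hx
      show x ∈ (H1 : Set H)
      rw [hH1]; exact hx
  -- adjoint P also doubly commutes with Q
  have h1' : adjoint P * Q = Q * adjoint P := by
    have := congrArg star h2
    simpa [← star_eq_adjoint, star_mul] using this.symm
  have h2' : adjoint P * adjoint Q = adjoint Q * adjoint P := by
    have := congrArg star h1
    simpa [← star_eq_adjoint, star_mul] using this.symm
  have hPmem : ∀ x ∈ H1, P x ∈ H1 := by
    intro x hx
    exact (hmem (P x)).mpr (my_inv Q P hQ h1 h2 x ((hmem x).mp hx))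
  have hPamem : ∀ x ∈ H1, adjoint P x ∈ H1 := by
    intro x hx
    exact (hmem (adjoint P x)).mpr (my_inv Q (adjoint P) hQ h1' h2' x ((hmem x).mp hx))
  refine ⟨⟨hPmem, hPamem⟩, ?_, ?_⟩
  · intro x hx
    rw [Submodule.mem_orthogonal] at hx ⊢
    intro u hu
    rw [← adjoint_inner_left]
    exact hx _ (hPamem u hu)
  · intro x hx
    rw [Submodule.mem_orthogonal] at hx ⊢
    intro u hu
    rw [← adjoint_inner_left]
    have hmem2 : (adjoint (adjoint P)) u ∈ H1 := by rw [adjoint_adjoint]; exact hPmem u hu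
    exact hx _ hmem2
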